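/- arXiv:1106.4598 — 3 statements merged into one kernel-verified Lean document; each statement's English description precedes it below -/
import Mathlib

section
/- Let J(θ), θ > 0, be the family of self-adjoint Jacobi operators with discrete simple spectrum obtained by multiplying the first diagonal entry q_1 of a fixed Jacobi matrix by θ² and the first off-diagonal entry b_1 by θ. Let λ_k(θ) be an eigenvalue of J(θ) depending analytically on θ, with normalized eigenvector f(θ) satisfying ⟨δ_1, f(θ)⟩ = 1, and let α_k(θ) = ‖f(θ)‖² be the corresponding normalizing constant. Then d/dθ λ_k(θ) = 2λ_k(θ)/(θ α_k(θ)). -/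
noncomputable section

/-- The Hilbert space ℓ²(ℕ) of square-summable complex sequences. -/
abbrev H : Type := lp (fun _ : ℕ => ℂ) 2

/-- The canonical basis vectors δ_n (0-indexed: `delta 0` is δ₁). -/
def delta (n : ℕ) : H := lp.single 2 n 1

local notation "⟪" x ", " y "⟫" => @inner ℂ _ _ x y

/-- `J` acts as the Jacobi (tridiagonal) matrix with diagonal `q` and
off-diagonal `b` (0-indexed). -/
def IsJacobi (J : H →L[ℂ] H) (q b : ℕ → ℝ) : Prop :=
  ∀ f : H, (J f) 0 = (q 0 : ℂ) * f 0 + (b 0 : ℂ) * f 1 ∧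
    ∀ k : ℕ, (J f) (k+1) = (b k : ℂ) * f k + (q (k+1) : ℂ) * f (k+1) + (b (k+1) : ℂ) * f (k+2)

/-
`J(θ')` and `J(θ)` differ only in the first row and column, so self-adjointness gives
`(λ(θ') - λ(θ)) ⟪f(θ), f(θ')⟫ = (θ' - θ) ((θ' + θ) q₁ + b₁ f(θ')₂ + b₁ conj f(θ)₂)`.
Dividing by `θ' - θ` and letting `θ' → θ` yields `λ' α = 2θ q₁ + 2 b₁ Re f(θ)₂`, and the first
row of the eigenvalue equation, `θ² q₁ + θ b₁ f(θ)₂ = λ`, turns `θ` times the right-hand side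
into `2λ`.
-/

open Filter Topology ComplexConjugate

lemma inner_delta_left (n : ℕ) (x : H) : ⟪delta n, x⟫ = x n := by
  simp [delta, lp.inner_single_left, RCLike.inner_apply]

lemma inner_delta_right (x : H) (n : ℕ) : ⟪x, delta n⟫ = conj (x n) := by
  simp [delta, lp.inner_single_right, RCLike.inner_apply]

lemma delta_apply (n m : ℕ) : delta n m = if m = n then 1 else 0 := by
  simp [delta, lp.single_apply, Pi.single_apply]

lemma Continuous.apply_coord {X : Type*} [TopologicalSpace X] {f : X → H}
    (hf : Continuous f) (n : ℕ) : Continuous fun x => f x n := by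
  simp_rw [← inner_delta_left n]
  exact continuous_const.inner hf

lemma IsJacobi.apply_sub_apply {J J' : H →L[ℂ] H} {q b q' b' : ℕ → ℝ}
    (hJ : IsJacobi J q b) (hJ' : IsJacobi J' q' b')
    (hq : ∀ n, q (n + 1) = q' (n + 1)) (hb : ∀ n, b (n + 1) = b' (n + 1)) (x : H) :
    J x - J' x = (((q 0 - q' 0 : ℝ) : ℂ) * x 0 + ((b 0 - b' 0 : ℝ) : ℂ) * x 1) • delta 0
      + (((b 0 - b' 0 : ℝ) : ℂ) * x 0) • delta 1 := by
  ext n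
  simp only [lp.coeFn_sub, lp.coeFn_add, lp.coeFn_smul, Pi.sub_apply, Pi.add_apply,
    Pi.smul_apply, smul_eq_mul, delta_apply]
  obtain ⟨h0, hsucc⟩ := hJ x
  obtain ⟨h0', hsucc'⟩ := hJ' x
  rcases n with _ | _ | k
  · simp only [h0, h0']
    push_cast
    ring
  · simp only [hsucc 0, hsucc' 0, hq, hb]
    push_cast
    ring
  · simp [hsucc (k + 1), hsucc' (k + 1), hq, hb]

lemma IsJacobi.first_row_of_eigen {J : H →L[ℂ] H} {q b : ℕ → ℝ} (hJ : IsJacobi J q b)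
    {x : H} {μ : ℂ} (hx : J x = μ • x) (hx0 : x 0 = 1) : (q 0 : ℂ) + b 0 * x 1 = μ := by
  have := (hJ x).1
  rw [hx, lp.coeFn_smul, Pi.smul_apply, hx0, smul_eq_mul, mul_one] at this
  rw [this, mul_one]

lemma inner_eigenvector_sub_apply {E : Type*} [NormedAddCommGroup E] [InnerProductSpace ℂ E]
    [CompleteSpace E] {A B : E →L[ℂ] E} (hB : IsSelfAdjoint B) {x y : E} {μ ν : ℝ}
    (hx : A x = (μ : ℂ) • x) (hy : B y = (ν : ℂ) • y) :
    ⟪y, A x - B x⟫ = ((μ - ν : ℝ) : ℂ) * ⟪y, x⟫ := by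
  have hsymm : ⟪B y, x⟫ = ⟪y, B x⟫ := hB.isSymmetric y x
  rw [inner_sub_right, hx, inner_smul_right, ← hsymm, hy, inner_smul_left, Complex.conj_ofReal]
  push_cast
  ring

lemma deriv_mul_eq_of_eventually_sub_mul_eq {l : ℝ → ℝ} {c g : ℝ → ℂ} {x : ℝ}
    (hl : DifferentiableAt ℝ l x) (hc : ContinuousAt c x) (hg : ContinuousAt g x)
    (h : ∀ᶠ y in 𝓝 x, ((l y - l x : ℝ) : ℂ) * c y = ((y - x : ℝ) : ℂ) * g y) :
    ((deriv l x : ℝ) : ℂ) * c x = g x := by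
  have hslope : ∀ᶠ y in 𝓝[≠] x, (slope l x y : ℂ) * c y = g y := by
    filter_upwards [self_mem_nhdsWithin, nhdsWithin_le_nhds h] with y hne hy
    have hyx : ((y - x : ℝ) : ℂ) ≠ 0 := by exact_mod_cast sub_ne_zero.mpr hne
    rw [slope_def_field, Complex.ofReal_div, div_mul_eq_mul_div, hy, mul_div_cancel_left₀ _ hyx]
  have hlim : Tendsto (fun y => (slope l x y : ℂ) * c y) (𝓝[≠] x)
      (𝓝 (((deriv l x : ℝ) : ℂ) * c x)) :=
    ((Complex.continuous_ofReal.tendsto _).comp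
      (hasDerivAt_iff_tendsto_slope.mp hl.hasDerivAt)).mul (hc.mono_left nhdsWithin_le_nhds)
  exact tendsto_nhds_unique (hlim.congr' hslope) (hg.mono_left nhdsWithin_le_nhds)

theorem eigenvalue_derivative_general
    (q b : ℕ → ℝ)
    (J : ℝ → H →L[ℂ] H)
    (hsa : ∀ θ : ℝ, 0 < θ → IsSelfAdjoint (J θ))
    (hJac : ∀ θ : ℝ, 0 < θ →
      IsJacobi (J θ) (fun n => if n = 0 then θ ^ 2 * q 0 else q n)
        (fun n => if n = 0 then θ * b 0 else b n))
    (lam : ℝ → ℝ) (f : ℝ → H)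
    (hlam : ∀ θ : ℝ, 0 < θ → DifferentiableAt ℝ lam θ)
    (hf : ∀ θ : ℝ, 0 < θ → J θ (f θ) = (lam θ : ℂ) • f θ)
    (hf1 : ∀ θ : ℝ, 0 < θ → ⟪delta 0, f θ⟫ = 1)
    (hfcont : Continuous f) :
    ∀ θ : ℝ, 0 < θ → deriv lam θ = 2 * lam θ / (θ * ‖f θ‖ ^ 2) := by
  intro θ hθ
  have hf0 : ∀ θ, 0 < θ → f θ 0 = 1 := fun θ hθ => by rw [← inner_delta_left, hf1 θ hθ]
  have hperturb : ∀ᶠ y in 𝓝 θ, ((lam y - lam θ : ℝ) : ℂ) * ⟪f θ, f y⟫ =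
      ((y - θ : ℝ) : ℂ) * ((y + θ : ℂ) * q 0 + b 0 * f y 1 + b 0 * conj (f θ 1)) := by
    filter_upwards [eventually_gt_nhds hθ] with y hy
    rw [← inner_eigenvector_sub_apply (hsa θ hθ) (hf y hy) (hf θ hθ),
      (hJac y hy).apply_sub_apply (hJac θ hθ) (fun _ => rfl) (fun _ => rfl), inner_add_right,
      inner_smul_right, inner_smul_right, inner_delta_right, inner_delta_right, hf0 y hy,
      hf0 θ hθ]
    simp only [↓reduceIte, Complex.ofReal_sub, Complex.ofReal_mul, Complex.ofReal_pow, mul_one,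
      map_one]
    ring
  have hcoord := hfcont.apply_coord 1
  have hofReal := Complex.continuous_ofReal
  have hderiv := deriv_mul_eq_of_eventually_sub_mul_eq (hlam θ hθ)
    (continuous_const.inner hfcont).continuousAt (by fun_prop) hperturb
  have hrow := (hJac θ hθ).first_row_of_eigen (hf θ hθ) (hf0 θ hθ)
  have hrow_conj := congrArg conj hrow
  simp only [↓reduceIte, Complex.ofReal_mul, Complex.ofReal_pow, map_add, map_mul, map_pow,
    Complex.conj_ofReal] at hrow hrow_conj
  rw [inner_self_eq_norm_sq_to_K] at hderiv
  have hnorm : ‖f θ‖ ≠ 0 := fun h => by simpa [norm_eq_zero.mp h] using hf0 θ hθ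
  rw [eq_div_iff (mul_ne_zero hθ.ne' (pow_ne_zero 2 hnorm))]
  apply Complex.ofReal_injective
  push_cast
  linear_combination θ * hderiv + hrow + hrow_conj

/-- Derivative of an eigenvalue of the family J(θ) with respect to θ:
dλ_k/dθ = 2λ_k(θ)/(θ α_k(θ)), where α_k(θ) = ‖f(θ)‖² is the normalizing
constant of the eigenvector f(θ) with first component 1. -/
theorem eigenvalue_derivative
    (q b : ℕ → ℝ) (hb : ∀ n, 0 < b n)
    (J : ℝ → H →L[ℂ] H)
    (hsa : ∀ θ : ℝ, 0 < θ → IsSelfAdjoint (J θ))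
    (hJac : ∀ θ : ℝ, 0 < θ →
      IsJacobi (J θ) (fun n => if n = 0 then θ ^ 2 * q 0 else q n)
        (fun n => if n = 0 then θ * b 0 else b n))
    (lam : ℝ → ℝ) (f : ℝ → H)
    (hlam : ∀ θ : ℝ, 0 < θ → DifferentiableAt ℝ lam θ)
    (hf : ∀ θ : ℝ, 0 < θ → J θ (f θ) = (lam θ : ℂ) • f θ)
    (hf1 : ∀ θ : ℝ, 0 < θ → ⟪delta 0, f θ⟫ = 1)
    (hfcont : Continuous f) :
    ∀ θ : ℝ, 0 < θ → deriv lam θ = 2 * lam θ / (θ * ‖f θ‖ ^ 2) :=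
  eigenvalue_derivative_general q b J hsa hJac lam f hlam hf hf1 hfcont
end
end

section
/- Let {λ_k}_{k∈M} and {μ_k}_{k∈M} be two interlacing real sequences without finite accumulation points, none containing 0, with λ_k < μ_k < λ_{k+1} on ℝ₊ and μ_k < λ_k < μ_{k+1} on ℝ₋ (or the reverse), and suppose Σ_{k∈M}(μ_k − λ_k) converges absolutely with Π_{k∈M} μ_k/λ_k ≠ 1. Define τ_n = (μ_n − λ_n) Π_{k≠n} (μ_k − λ_n)/(λ_k − λ_n) / [λ_n(Π_{k∈M} μ_k/λ_k − 1)]. Then τ_n > 0 for every n ∈ M. -/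
/-!
Every factor of the product over `k ≠ n` is positive, because interlacing puts `μ_k` and `λ_k`
on the same side of `λ_n`; the product converges to a positive number since
`(μ_k - λ_n)/(λ_k - λ_n) - 1 = (μ_k - λ_k)/(λ_k - λ_n)` is summable. It remains to see that
`μ_n/λ_n - 1` and `κ - 1` have the same sign. When `μ` is shifted away from zero, all ratios
`μ_k/λ_k` exceed `1`, hence so does `κ`. When `μ` is shifted towards zero, all ratios are below `1`,
and at most two of them, adjacent to the sign change of `λ`, are negative, with product below `1`;
so every partial product, hence `κ`, is at most `1`.
-/

open Filter

namespace Real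

variable {ι : Type*} {f : ι → ℝ}

lemma summable_log_of_summable_sub_one (hf : Summable fun i => f i - 1) :
    Summable fun i => log (f i) := by
  simpa using summable_log_one_add_of_summable hf

lemma tprod_pos_of_summable_sub_one (hpos : ∀ i, 0 < f i) (hf : Summable fun i => f i - 1) :
    0 < ∏' i, f i := by
  rw [← rexp_tsum_eq_tprod hpos (summable_log_of_summable_sub_one hf)]
  exact exp_pos _

lemma one_lt_tprod_of_summable_sub_one (hgt : ∀ i, 1 < f i) (hf : Summable fun i => f i - 1)
    (i : ι) : 1 < ∏' i, f i := by
  have hpos : ∀ i, 0 < f i := fun i => one_pos.trans (hgt i)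
  rw [← rexp_tsum_eq_tprod hpos (summable_log_of_summable_sub_one hf), one_lt_exp_iff]
  exact (summable_log_of_summable_sub_one hf).tsum_pos (fun j => (log_pos (hgt j)).le) i
    (log_pos (hgt i))

end Real

lemma Finset.prod_le_one_of_neg_pair {ι : Type*} {f : ι → ℝ} (hle : ∀ i, f i ≤ 1)
    (hthree : ∀ i j k, f i < 0 → f j < 0 → f k < 0 → i = j ∨ i = k ∨ j = k)
    (hpair : ∀ i j, i ≠ j → f i < 0 → f j < 0 → f i * f j ≤ 1) (s : Finset ι) :
    ∏ i ∈ s, f i ≤ 1 := by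
  classical
  set t := s.filter (f · < 0)
  have hnonneg : 0 ≤ ∏ i ∈ s with ¬f i < 0, f i :=
    Finset.prod_nonneg fun i hi => not_lt.1 (Finset.mem_filter.1 hi).2
  have hnonneg_le : ∏ i ∈ s with ¬f i < 0, f i ≤ 1 :=
    Finset.prod_le_one (fun i hi => not_lt.1 (Finset.mem_filter.1 hi).2) fun i _ => hle i
  have hcard : t.card ≤ 2 := by
    by_contra! h
    obtain ⟨a, ha, b, hb, c, hc, hab, hac, hbc⟩ := Finset.two_lt_card.1 h
    simp only [t, Finset.mem_filter] at ha hb hc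
    rcases hthree a b c ha.2 hb.2 hc.2 with h | h | h <;> contradiction
  have hneg_le : ∏ i ∈ t, f i ≤ 1 := by
    rcases (by omega : t.card = 0 ∨ t.card = 1 ∨ t.card = 2) with h | h | h
    · simp [Finset.card_eq_zero.1 h]
    · obtain ⟨a, ha⟩ := Finset.card_eq_one.1 h
      simpa [ha] using hle a
    · obtain ⟨a, b, hab, htab⟩ := Finset.card_eq_two.1 h
      have ha : f a < 0 := (Finset.mem_filter.1 (show a ∈ t by simp [htab])).2
      have hb : f b < 0 := (Finset.mem_filter.1 (show b ∈ t by simp [htab])).2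
      rw [htab, Finset.prod_pair hab]
      exact hpair a b hab ha hb
  rw [← s.prod_filter_mul_prod_filter_not (f · < 0)]
  nlinarith [mul_nonneg (sub_nonneg.2 hneg_le) hnonneg]

lemma summable_div_sub_one_of_summable_abs_sub {ι : Type*} {lam mu : ι → ℝ}
    (hlam : Tendsto (fun i => |lam i|) cofinite atTop)
    (hsum : Summable fun i => |mu i - lam i|) (c : ℝ) :
    Summable fun i => (mu i - c) / (lam i - c) - 1 := by
  refine .of_norm_bounded_eventually hsum ?_
  filter_upwards [hlam.eventually_ge_atTop (|c| + 1)] with i hi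
  have hdist : 1 ≤ |lam i - c| := by linarith [abs_sub_abs_le_abs_sub (lam i) c]
  have hne : lam i - c ≠ 0 := abs_pos.1 (one_pos.trans_le hdist)
  rw [div_sub_one hne, sub_sub_sub_cancel_right, Real.norm_eq_abs, abs_div]
  exact div_le_self (abs_nonneg _) hdist

section Interlacing

variable {M : Set ℤ} {lam mu : ℤ → ℝ}

def InterlacesAwayFromZero (M : Set ℤ) (lam mu : ℤ → ℝ) : Prop :=
  ∀ k ∈ M, (0 < lam k → lam k < mu k ∧ (k + 1 ∈ M → mu k < lam (k + 1))) ∧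
    (lam k < 0 → mu k < lam k ∧ (k - 1 ∈ M → lam (k - 1) < mu k))

def InterlacesTowardZero (M : Set ℤ) (lam mu : ℤ → ℝ) : Prop :=
  ∀ k ∈ M, (0 < lam k → mu k < lam k ∧ (k - 1 ∈ M → lam (k - 1) < mu k)) ∧
    (lam k < 0 → lam k < mu k ∧ (k + 1 ∈ M → mu k < lam (k + 1)))

def BetweenNeighbours (M : Set ℤ) (lam mu : ℤ → ℝ) : Prop :=
  ∀ k ∈ M, (k + 1 ∈ M → mu k < lam (k + 1)) ∧ (k - 1 ∈ M → lam (k - 1) < mu k)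

lemma InterlacesAwayFromZero.one_lt_div (h : InterlacesAwayFromZero M lam mu)
    (hne : ∀ k ∈ M, lam k ≠ 0) {k : ℤ} (hk : k ∈ M) : 1 < mu k / lam k := by
  rcases (hne k hk).lt_or_gt with hneg | hpos
  · exact (one_lt_div_of_neg hneg).2 ((h k hk).2 hneg).1
  · exact (_root_.one_lt_div hpos).2 ((h k hk).1 hpos).1

lemma InterlacesTowardZero.div_lt_one (h : InterlacesTowardZero M lam mu)
    (hne : ∀ k ∈ M, lam k ≠ 0) {k : ℤ} (hk : k ∈ M) : mu k / lam k < 1 := by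
  rcases (hne k hk).lt_or_gt with hneg | hpos
  · exact (div_lt_one_of_neg hneg).2 ((h k hk).2 hneg).1
  · exact (_root_.div_lt_one hpos).2 ((h k hk).1 hpos).1

lemma InterlacesAwayFromZero.betweenNeighbours (h : InterlacesAwayFromZero M lam mu)
    (hlam : StrictMonoOn lam M) (hne : ∀ k ∈ M, lam k ≠ 0) : BetweenNeighbours M lam mu := by
  intro k hk
  refine ⟨fun hk1 => ?_, fun hk1 => ?_⟩ <;> rcases (hne k hk).lt_or_gt with hneg | hpos
  · linarith [((h k hk).2 hneg).1, hlam hk hk1 (lt_add_one k)]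
  · exact ((h k hk).1 hpos).2 hk1
  · exact ((h k hk).2 hneg).2 hk1
  · linarith [((h k hk).1 hpos).1, hlam hk1 hk (sub_one_lt k)]

lemma InterlacesTowardZero.betweenNeighbours (h : InterlacesTowardZero M lam mu)
    (hlam : StrictMonoOn lam M) (hne : ∀ k ∈ M, lam k ≠ 0) : BetweenNeighbours M lam mu := by
  intro k hk
  refine ⟨fun hk1 => ?_, fun hk1 => ?_⟩ <;> rcases (hne k hk).lt_or_gt with hneg | hpos
  · exact ((h k hk).2 hneg).2 hk1
  · linarith [((h k hk).1 hpos).1, hlam hk hk1 (lt_add_one k)]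
  · linarith [((h k hk).2 hneg).1, hlam hk1 hk (sub_one_lt k)]
  · exact ((h k hk).1 hpos).2 hk1

namespace BetweenNeighbours

variable (hb : BetweenNeighbours M lam mu) (hM : M.OrdConnected) (hlam : StrictMonoOn lam M)
include hb hM hlam

lemma div_sub_pos {n k : ℤ} (hn : n ∈ M) (hk : k ∈ M) (hkn : k ≠ n) :
    0 < (mu k - lam n) / (lam k - lam n) := by
  rcases hkn.lt_or_gt with hlt | hgt
  · have hk1 : k + 1 ∈ M := hM.out hk hn ⟨by omega, by omega⟩
    have := (hb k hk).1 hk1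
    have := hlam.monotoneOn hk1 hn (by omega)
    exact div_pos_of_neg_of_neg (by linarith) (by linarith [hlam hk hn hlt])
  · have hk1 : k - 1 ∈ M := hM.out hn hk ⟨by omega, by omega⟩
    have := (hb k hk).2 hk1
    have := hlam.monotoneOn hn hk1 (by omega)
    exact div_pos (by linarith) (by linarith [hlam hn hk hgt])

/-- Only at a sign change of `λ` can `μ_k/λ_k` be negative; two such ratios then sit on
either side of the sign change, where `|μ_i| < |λ_j|` and `|μ_j| < |λ_i|`. -/
lemma adjacent_of_div_neg {i j : ℤ} (hi : i ∈ M) (hj : j ∈ M) (hij : i ≠ j)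
    (hfi : mu i / lam i < 0) (hfj : mu j / lam j < 0) :
    (j = i + 1 ∨ i = j + 1) ∧ mu i / lam i * (mu j / lam j) ≤ 1 := by
  wlog hlt : i < j generalizing i j
  · obtain ⟨hadj, hprod⟩ := this hj hi hij.symm hfj hfi (by omega)
    exact ⟨hadj.symm, by linarith [mul_comm (mu i / lam i) (mu j / lam j)]⟩
  have hi1 : i + 1 ∈ M := hM.out hi hj ⟨by omega, by omega⟩
  have hj1 : j - 1 ∈ M := hM.out hi hj ⟨by omega, by omega⟩
  have hmui := (hb i hi).1 hi1
  have hmuj := (hb j hj).2 hj1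
  have hle1 := hlam.monotoneOn hi1 hj (by omega)
  have hle2 := hlam.monotoneOn hi hj1 (by omega)
  obtain ⟨hmui0, hlami0⟩ : 0 < mu i ∧ lam i < 0 := by
    rcases div_neg_iff.1 hfi with h | ⟨_, _⟩
    · exact h
    · rcases div_neg_iff.1 hfj with ⟨_, _⟩ | ⟨_, _⟩ <;> linarith [hlam hi hj hlt]
  obtain ⟨hmuj0, hlamj0⟩ : mu j < 0 ∧ 0 < lam j := by
    rcases div_neg_iff.1 hfj with ⟨_, _⟩ | h
    · linarith
    · exact h
  have hji : j = i + 1 := by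
    by_contra hne
    linarith [hlam.monotoneOn hi1 hj1 (by omega)]
  subst hji
  simp only [add_sub_cancel_right] at hmuj
  refine ⟨Or.inl rfl, ?_⟩
  rw [div_mul_div_comm, div_le_one_of_neg (by nlinarith)]
  nlinarith

lemma tprod_div_sub_pos (hlim : Tendsto (fun k : M => |lam k|) cofinite atTop)
    (hsum : Summable fun k : M => |mu k - lam k|) {n : ℤ} (hn : n ∈ M) :
    0 < ∏' k : {k : M // k.1 ≠ n}, (mu k.1.1 - lam n) / (lam k.1.1 - lam n) :=
  Real.tprod_pos_of_summable_sub_one (fun k => hb.div_sub_pos hM hlam hn k.1.2 k.2)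
    (summable_div_sub_one_of_summable_abs_sub
      (hlim.comp Subtype.val_injective.tendsto_cofinite)
      (hsum.comp_injective Subtype.val_injective) (lam n))

lemma tprod_div_lt_one (hlt : ∀ k ∈ M, mu k / lam k < 1)
    (hκ : ∏' k : M, mu k / lam k ≠ 1) : ∏' k : M, mu k / lam k < 1 := by
  have hmul : Multipliable fun k : M => mu k / lam k := by
    by_contra h
    exact hκ (tprod_eq_one_of_not_multipliable h)
  have hadj {i j : M} (hij : i ≠ j) (hfi : mu i / lam i < 0) (hfj : mu j / lam j < 0) :=
    hb.adjacent_of_div_neg hM hlam i.2 j.2 (Subtype.coe_ne_coe.2 hij) hfi hfj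
  refine lt_of_le_of_ne (le_of_tendsto' hmul.hasProd fun s => ?_) hκ
  refine Finset.prod_le_one_of_neg_pair (fun k => (hlt k.1 k.2).le) ?_
    (fun i j hij hfi hfj => (hadj hij hfi hfj).2) s
  intro i j k hfi hfj hfk
  by_contra! h
  have := (hadj h.1 hfi hfj).1
  have := (hadj h.2.1 hfi hfk).1
  have := (hadj h.2.2 hfj hfk).1
  omega

end BetweenNeighbours

end Interlacing

lemma tendsto_abs_cofinite_atTop_of_finite {M : Set ℤ} {lam : ℤ → ℝ}
    (h : ∀ C : ℝ, {k : ℤ | k ∈ M ∧ |lam k| ≤ C}.Finite) :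
    Tendsto (fun k : M => |lam k|) cofinite atTop := by
  refine tendsto_atTop.2 fun C => eventually_cofinite.2 ?_
  refine ((h C).preimage Subtype.val_injective.injOn).subset fun k hk => ?_
  exact ⟨k.2, (not_le.1 hk).le⟩

theorem tau_positive_general
    (M : Set ℤ) (hM : M.OrdConnected) (lam mu : ℤ → ℝ)
    (hne0 : ∀ k ∈ M, lam k ≠ 0 ∧ mu k ≠ 0)
    (haccl : ∀ C : ℝ, {k : ℤ | k ∈ M ∧ |lam k| ≤ C}.Finite)
    (hmono : ∀ k : ℤ, k ∈ M → k + 1 ∈ M → lam k < lam (k + 1))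
    -- interlacing, with μ shifted right on ℝ₊ and left on ℝ₋, or the reverse
    (hinter :
      (∀ k ∈ M, (0 < lam k → lam k < mu k ∧ (k + 1 ∈ M → mu k < lam (k + 1))) ∧
        (lam k < 0 → mu k < lam k ∧ (k - 1 ∈ M → lam (k - 1) < mu k))) ∨
      (∀ k ∈ M, (0 < lam k → mu k < lam k ∧ (k - 1 ∈ M → lam (k - 1) < mu k)) ∧
        (lam k < 0 → lam k < mu k ∧ (k + 1 ∈ M → mu k < lam (k + 1)))))
    (hsum : Summable fun k : M => |mu k.1 - lam k.1|)
    (hkappa : (∏' k : M, mu k.1 / lam k.1) ≠ 1) :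
    ∀ n ∈ M, 0 <
      (mu n - lam n) * (∏' k : {k : M // k.1 ≠ n}, (mu k.1.1 - lam n) / (lam k.1.1 - lam n))
        / (lam n * ((∏' k : M, mu k.1 / lam k.1) - 1)) := by
  intro n hn
  have hlam : StrictMonoOn lam M := strictMonoOn_of_lt_add_one hM fun k _ hk hk1 => hmono k hk hk1
  have hne : ∀ k ∈ M, lam k ≠ 0 := fun k hk => (hne0 k hk).1
  have hlim := tendsto_abs_cofinite_atTop_of_finite haccl
  have hb : BetweenNeighbours M lam mu := by
    rcases hinter with (h : InterlacesAwayFromZero M lam mu) | (h : InterlacesTowardZero M lam mu)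
    exacts [InterlacesAwayFromZero.betweenNeighbours h hlam hne,
      InterlacesTowardZero.betweenNeighbours h hlam hne]
  have hsign : 0 < (mu n / lam n - 1) / ((∏' k : M, mu k.1 / lam k.1) - 1) := by
    rcases hinter with (h : InterlacesAwayFromZero M lam mu) | (h : InterlacesTowardZero M lam mu)
    · have hκ : 1 < ∏' k : M, mu k.1 / lam k.1 := by
        refine Real.one_lt_tprod_of_summable_sub_one (fun k => h.one_lt_div hne k.2) ?_ ⟨n, hn⟩
        simpa using summable_div_sub_one_of_summable_abs_sub hlim hsum 0
      exact div_pos (sub_pos.2 (h.one_lt_div hne hn)) (sub_pos.2 hκ)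
    · exact div_pos_of_neg_of_neg (sub_neg.2 (h.div_lt_one hne hn))
        (sub_neg.2 (hb.tprod_div_lt_one hM hlam (fun k hk => h.div_lt_one hne hk) hkappa))
  rw [mul_div_right_comm, ← div_div, ← div_sub_one (hne n hn)]
  exact mul_pos hsign (hb.tprod_div_sub_pos hM hlam hlim hsum hn)

/-- Positivity of the would-be normalizing constants τ_n built from two
interlacing sequences (Theorem on necessary and sufficient conditions):
τ_n = (μ_n−λ_n) Π_{k≠n} (μ_k−λ_n)/(λ_k−λ_n) / [λ_n (Π μ_k/λ_k − 1)] > 0. -/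
theorem tau_positive
    (M : Set ℤ) (hM : M.OrdConnected) (lam mu : ℤ → ℝ)
    (hne0 : ∀ k ∈ M, lam k ≠ 0 ∧ mu k ≠ 0)
    (haccl : ∀ C : ℝ, {k : ℤ | k ∈ M ∧ |lam k| ≤ C}.Finite)
    (haccm : ∀ C : ℝ, {k : ℤ | k ∈ M ∧ |mu k| ≤ C}.Finite)
    (hmono : ∀ k : ℤ, k ∈ M → k + 1 ∈ M → lam k < lam (k + 1))
    -- interlacing, with μ shifted right on ℝ₊ and left on ℝ₋, or the reverse
    (hinter :
      (∀ k ∈ M, (0 < lam k → lam k < mu k ∧ (k + 1 ∈ M → mu k < lam (k + 1))) ∧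
        (lam k < 0 → mu k < lam k ∧ (k - 1 ∈ M → lam (k - 1) < mu k))) ∨
      (∀ k ∈ M, (0 < lam k → mu k < lam k ∧ (k - 1 ∈ M → lam (k - 1) < mu k)) ∧
        (lam k < 0 → lam k < mu k ∧ (k + 1 ∈ M → mu k < lam (k + 1)))))
    (hsum : Summable fun k : M => |mu k.1 - lam k.1|)
    (hkappa : (∏' k : M, mu k.1 / lam k.1) ≠ 1) :
    ∀ n ∈ M, 0 <
      (mu n - lam n) * (∏' k : {k : M // k.1 ≠ n}, (mu k.1.1 - lam n) / (lam k.1.1 - lam n))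
        / (lam n * ((∏' k : M, mu k.1 / lam k.1) - 1)) :=
  tau_positive_general M hM lam mu hne0 haccl hmono hinter hsum hkappa
end

section
/- Let {λ_k}_{k∈M} be real with no finite accumulation points and α_k(θ) > 0 depend continuously on θ ∈ [θ_1, θ_2] ⊂ (0,∞). Suppose the series Σ_k λ_k(θ)²/α_k(θ) converges pointwise on [θ_1,θ_2] to a continuous function s_2(θ), where λ_k(θ) are continuous. Then the series Σ_k λ_k(θ)/α_k(θ) converges uniformly on [θ_1, θ_2]. -/
open Filter

set_option maxHeartbeats 1000000 in
/-- If Σ λ_k(θ)²/α_k(θ) converges pointwise on [θ₁,θ₂] to a continuous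
function, the λ_k having no finite accumulation points, then
Σ λ_k(θ)/α_k(θ) converges uniformly on [θ₁,θ₂]. -/
theorem first_moment_series_uniformly_convergent
    {ι : Type*} [Countable ι] (θ₁ θ₂ : ℝ) (h1 : 0 < θ₁) (h12 : θ₁ ≤ θ₂)
    (lam alpha : ι → ℝ → ℝ) (s2 : ℝ → ℝ)
    (hlamc : ∀ k, ContinuousOn (lam k) (Set.Icc θ₁ θ₂))
    (halphac : ∀ k, ContinuousOn (alpha k) (Set.Icc θ₁ θ₂))
    (halphapos : ∀ k, ∀ θ ∈ Set.Icc θ₁ θ₂, 0 < alpha k θ)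
    (hacc : ∀ C : ℝ, {k : ι | ∃ θ ∈ Set.Icc θ₁ θ₂, |lam k θ| ≤ C}.Finite)
    (hs2c : ContinuousOn s2 (Set.Icc θ₁ θ₂))
    (hs2 : ∀ θ ∈ Set.Icc θ₁ θ₂,
      HasSum (fun k => (lam k θ) ^ 2 / alpha k θ) (s2 θ)) :
    (∀ θ ∈ Set.Icc θ₁ θ₂, Summable fun k => lam k θ / alpha k θ) ∧
    TendstoUniformlyOn (fun (s : Finset ι) θ => ∑ k ∈ s, lam k θ / alpha k θ)
      (fun θ => ∑' k, lam k θ / alpha k θ) atTop (Set.Icc θ₁ θ₂) := by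
  classical
  set I := Set.Icc θ₁ θ₂ with hI
  set F : Finset ι := (hacc 1).toFinset with hF
  have hFmem : ∀ k, k ∉ F → ∀ θ ∈ I, 1 < |lam k θ| := by
    intro k hk θ hθ
    by_contra h
    exact hk ((hacc 1).mem_toFinset.mpr ⟨θ, hθ, le_of_not_gt h⟩)
  have hbound : ∀ k, k ∉ F → ∀ θ ∈ I,
      |lam k θ / alpha k θ| ≤ (lam k θ) ^ 2 / alpha k θ := by
    intro k hk θ hθ
    have hα := halphapos k θ hθ
    rw [abs_div, abs_of_pos hα]
    have h1lam := hFmem k hk θ hθ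
    have : |lam k θ| ≤ (lam k θ) ^ 2 := by
      rw [← sq_abs]; nlinarith
    exact div_le_div_of_nonneg_right this hα.le
  have hsummQ : ∀ θ ∈ I, Summable (fun k => (lam k θ) ^ 2 / alpha k θ) :=
    fun θ hθ => (hs2 θ hθ).summable
  have hsum : ∀ θ ∈ I, Summable fun k => lam k θ / alpha k θ := by
    intro θ hθ
    rw [← Finset.summable_compl_iff F]
    apply Summable.of_abs
    exact Summable.of_nonneg_of_le (fun k => abs_nonneg _)
      (fun k => hbound k.1 k.2 θ hθ) ((hsummQ θ hθ).subtype _)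
  refine ⟨hsum, ?_⟩
  have hnonneg : ∀ k, ∀ θ ∈ I, 0 ≤ (lam k θ) ^ 2 / alpha k θ := fun k θ hθ =>
    div_nonneg (sq_nonneg _) (halphapos k θ hθ).le
  -- continuity of remainders on the compact subtype
  have hcompact : IsCompact I := isCompact_Icc
  haveI : CompactSpace I := isCompact_iff_compactSpace.mp hcompact
  set G : Finset ι → I → ℝ := fun s x => s2 x - ∑ k ∈ s, (lam k x) ^ 2 / alpha k x with hG
  have hGc : ∀ s, Continuous (G s) := by
    intro s
    refine ContinuousOn.restrict (f := fun θ => s2 θ - ∑ k ∈ s, (lam k θ) ^ 2 / alpha k θ) ?_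
    apply hs2c.sub
    apply continuousOn_finset_sum
    intro k _
    exact ((hlamc k).pow 2).div (halphac k) (fun θ hθ => (halphapos k θ hθ).ne')
  have hGanti : ∀ s t : Finset ι, s ⊆ t → ∀ x : I, G t x ≤ G s x := by
    intro s t hst x
    apply sub_le_sub_left
    exact Finset.sum_le_sum_of_subset_of_nonneg hst
      (fun k _ _ => hnonneg k x.1 x.2)
  have hdini : ∀ ε > 0, ∃ s₀ : Finset ι, ∀ s : Finset ι, s₀ ⊆ s →
      ∀ x : I, G s x < ε := by
    intro ε hε
    have hptw : ∀ x : I, ∃ t : Finset ι, G t x < ε := by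
      intro x
      have h := hs2 x.1 x.2
      have h2 : ∀ᶠ s : Finset ι in atTop,
          s2 x.1 - ε < ∑ k ∈ s, (lam k x.1) ^ 2 / alpha k x.1 :=
        h.eventually (eventually_gt_nhds (by linarith))
      obtain ⟨t, ht⟩ := h2.exists
      exact ⟨t, by simp only [G]; linarith⟩
    choose t ht using hptw
    obtain ⟨T, hT⟩ := isCompact_univ.elim_finite_subcover
      (fun x : I => G (t x) ⁻¹' Set.Iio ε)
      (fun x => (hGc (t x)).isOpen_preimage _ isOpen_Iio)
      (by intro x _; exact Set.mem_iUnion.mpr ⟨x, ht x⟩)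
    refine ⟨T.biUnion t, fun s hs x => ?_⟩
    obtain ⟨x₀, hx₀T, hx₀⟩ := Set.mem_iUnion₂.mp (hT (Set.mem_univ x))
    calc G s x ≤ G (t x₀) x := hGanti _ _ ((Finset.subset_biUnion_of_mem t hx₀T).trans hs) x
    _ < ε := hx₀
  -- conclude uniform convergence
  rw [Metric.tendstoUniformlyOn_iff]
  intro ε hε
  obtain ⟨s₀, hs₀⟩ := hdini ε hε
  filter_upwards [eventually_ge_atTop (s₀ ∪ F)] with s hs θ hθ
  have hsF : F ⊆ s := (Finset.subset_union_right).trans hs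
  have hs₀s : s₀ ⊆ s := (Finset.subset_union_left).trans hs
  have hsub : ∀ k : ((↑s : Set ι)ᶜ : Set ι),
      |lam k.1 θ / alpha k.1 θ| ≤ (lam k.1 θ) ^ 2 / alpha k.1 θ :=
    fun k => hbound k.1 (fun h => k.2 (hsF h)) θ hθ
  have hQc : Summable (fun k : ((↑s : Set ι)ᶜ : Set ι) => (lam k.1 θ) ^ 2 / alpha k.1 θ) :=
    (hsummQ θ hθ).subtype _
  have habs : Summable (fun k : ((↑s : Set ι)ᶜ : Set ι) => |lam k.1 θ / alpha k.1 θ|) :=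
    Summable.of_nonneg_of_le (fun k => abs_nonneg _) hsub hQc
  have hsplit := Summable.sum_add_tsum_compl (s := s) (hsum θ hθ)
  have hsplitQ := Summable.sum_add_tsum_compl (s := s) (hsummQ θ hθ)
  rw [dist_eq_norm, Real.norm_eq_abs]
  have h1' : (∑' k, lam k θ / alpha k θ) - ∑ k ∈ s, lam k θ / alpha k θ
      = ∑' k : ((↑s : Set ι)ᶜ : Set ι), lam k.1 θ / alpha k.1 θ := by linarith
  rw [h1']
  calc |∑' k : ((↑s : Set ι)ᶜ : Set ι), lam k.1 θ / alpha k.1 θ|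
      ≤ ∑' k : ((↑s : Set ι)ᶜ : Set ι), |lam k.1 θ / alpha k.1 θ| := by
        have habs' : Summable (fun k : ((↑s : Set ι)ᶜ : Set ι) => ‖lam k.1 θ / alpha k.1 θ‖) := by
          simpa only [Real.norm_eq_abs] using habs
        have h := norm_tsum_le_tsum_norm habs'
        simpa only [Real.norm_eq_abs] using h
    _ ≤ ∑' k : ((↑s : Set ι)ᶜ : Set ι), (lam k.1 θ) ^ 2 / alpha k.1 θ :=
        Summable.tsum_le_tsum hsub habs hQc
    _ = s2 θ - ∑ k ∈ s, (lam k θ) ^ 2 / alpha k θ := by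
        rw [← (hs2 θ hθ).tsum_eq]; linarith
    _ < ε := hs₀ s hs₀s ⟨θ, hθ⟩
end
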